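/- arXiv:1110.0699 — 2 statements merged into one kernel-verified Lean document; each statement's English description precedes it below -/
import Mathlib

section
/- Let α be a continuous action of a countable sofic group G on a compact metrizable space X with sofic approximation sequence Σ, and suppose the sofic topological pressure P_Σ(·, X, G) takes finite values on C(X). Then P_Σ(·, X, G) is convex: for all continuous f, g : X → ℝ and all p ∈ [0,1], P_Σ(pf + (1−p)g, X, G) ≤ p·P_Σ(f, X, G) + (1−p)·P_Σ(g, X, G). -/
/-!
For every finite family `E` of maps `Fin d → X`, Hölder's inequality bounds
`∑ φ ∈ E, exp (∑ a, (p * f + (1 - p) * g) (φ a))` by the product of the `p`-th power of the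
corresponding sum for `f` and the `(1 - p)`-th power of the one for `g`. So `log M` is convex in
the potential at every `(ε, F, δ, i)`, and the inequality survives the limsup over `i`, the
infimum over `(F, δ)` (comparing with `F₁ ∪ F₂` and `min δ₁ δ₂`, whose map sets are smaller) and
the supremum over `ε`. Compactness bounds `M` by `K ^ d`, so the pressure at a fixed scale is
`< ⊤`, which the extended-real arithmetic needs.
-/

open Filter MeasureTheory
open scoped Pointwise Classical BigOperators

namespace Sofic

structure ContAction (G : Type*) [Group G] (X : Type*) [TopologicalSpace X]
    (α : G → X → X) : Prop where
  one : ∀ x, α 1 x = x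
  mul : ∀ s t x, α (s * t) x = α s (α t x)
  cont : ∀ s, Continuous (α s)

structure IsContPseudoMetric (X : Type*) [TopologicalSpace X] (ρ : X → X → ℝ) : Prop where
  nonneg : ∀ x y, 0 ≤ ρ x y
  refl : ∀ x, ρ x x = 0
  symm : ∀ x y, ρ x y = ρ y x
  triangle : ∀ x y z, ρ x z ≤ ρ x y + ρ y z
  cont : Continuous fun p : X × X => ρ p.1 p.2

structure IsCompatMetric (X : Type*) [TopologicalSpace X] (ρ : X → X → ℝ)
    extends IsContPseudoMetric X ρ : Prop where
  eq_of_zero : ∀ x y, ρ x y = 0 → x = y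
  ball_mem : ∀ x : X, ∀ U ∈ nhds x, ∃ ε > 0, {y | ρ x y < ε} ⊆ U

structure IsSoficApprox (G : Type*) [Group G] (d : ℕ → ℕ)
    (σ : ∀ i, G → Equiv.Perm (Fin (d i))) : Prop where
  mul : ∀ s t : G, Tendsto
    (fun i => ((Finset.univ.filter fun a : Fin (d i) => σ i s (σ i t a) = σ i (s * t) a).card : ℝ) / (d i : ℝ))
    atTop (nhds 1)
  sep : ∀ s t : G, s ≠ t → Tendsto
    (fun i => ((Finset.univ.filter fun a : Fin (d i) => σ i s a ≠ σ i t a).card : ℝ) / (d i : ℝ))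
    atTop (nhds 1)
  dim_top : Tendsto d atTop atTop

noncomputable def rho2 {X : Type*} (ρ : X → X → ℝ) {d : ℕ} (φ ψ : Fin d → X) : ℝ :=
  Real.sqrt ((1 / (d : ℝ)) * ∑ a, (ρ (φ a) (ψ a)) ^ 2)

noncomputable def rhoInf {X : Type*} (ρ : X → X → ℝ) {d : ℕ} (φ ψ : Fin d → X) : ℝ :=
  ⨆ a : Fin d, ρ (φ a) (ψ a)

def MapSet {G X : Type*} [Group G] (α : G → X → X) (ρ : X → X → ℝ)
    (F : Finset G) (δ : ℝ) {d : ℕ} (σ : G → Equiv.Perm (Fin d)) : Set (Fin d → X) :=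
  {φ | ∀ s ∈ F, rho2 ρ (fun a => α s (φ a)) (fun a => φ (σ s a)) < δ}

noncomputable def Mval {G X : Type*} [Group G] (α : G → X → X) (f : X → ℝ) (ρ : X → X → ℝ)
    (ε : ℝ) (F : Finset G) (δ : ℝ) {d : ℕ} (σ : G → Equiv.Perm (Fin d))
    (sepd : (Fin d → X) → (Fin d → X) → ℝ) : ℝ :=
  sSup {r : ℝ | ∃ E : Finset (Fin d → X), ↑E ⊆ MapSet α ρ F δ σ ∧
    (∀ φ ∈ E, ∀ ψ ∈ E, φ ≠ ψ → ε ≤ sepd φ ψ) ∧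
    r = ∑ φ ∈ E, Real.exp (∑ a, f (φ a))}

noncomputable def PressureInf {G X : Type*} [Group G] (α : G → X → X) (f : X → ℝ)
    (ρ : X → X → ℝ) (d : ℕ → ℕ) (σ : ∀ i, G → Equiv.Perm (Fin (d i))) : EReal :=
  ⨆ (ε : ℝ) (_ : 0 < ε), ⨅ (F : Finset G) (_ : F.Nonempty), ⨅ (δ : ℝ) (_ : 0 < δ),
    Filter.limsup (fun i =>
      if (MapSet α ρ F δ (σ i)).Nonempty then
        (((Real.log (Mval α f ρ ε F δ (σ i) (rhoInf ρ))) / (d i : ℝ) : ℝ) : EReal)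
      else (⊥ : EReal)) atTop

noncomputable def Pressure2 {G X : Type*} [Group G] (α : G → X → X) (f : X → ℝ)
    (ρ : X → X → ℝ) (d : ℕ → ℕ) (σ : ∀ i, G → Equiv.Perm (Fin (d i))) : EReal :=
  ⨆ (ε : ℝ) (_ : 0 < ε), ⨅ (F : Finset G) (_ : F.Nonempty), ⨅ (δ : ℝ) (_ : 0 < δ),
    Filter.limsup (fun i =>
      if (MapSet α ρ F δ (σ i)).Nonempty then
        (((Real.log (Mval α f ρ ε F δ (σ i) (rho2 ρ))) / (d i : ℝ) : ℝ) : EReal)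
      else (⊥ : EReal)) atTop

def MapMuSet {G X : Type*} [Group G] [TopologicalSpace X] [MeasurableSpace X]
    (α : G → X → X) (μ : Measure X) (ρ : X → X → ℝ) (F : Finset G)
    (L : Finset C(X, ℝ)) (δ : ℝ) {d : ℕ} (σ : G → Equiv.Perm (Fin d)) : Set (Fin d → X) :=
  {φ | φ ∈ MapSet α ρ F δ σ ∧
    ∀ g ∈ L, |(1 / (d : ℝ)) * ∑ j, g (φ j) - ∫ x, g x ∂μ| < δ}

noncomputable def Nval {X : Type*} (ε : ℝ) {d : ℕ} (Y : Set (Fin d → X))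
    (sepd : (Fin d → X) → (Fin d → X) → ℝ) : ℝ :=
  sSup {r : ℝ | ∃ E : Finset (Fin d → X), ↑E ⊆ Y ∧
    (∀ φ ∈ E, ∀ ψ ∈ E, φ ≠ ψ → ε ≤ sepd φ ψ) ∧ r = (E.card : ℝ)}

noncomputable def MeasEntropy {G X : Type*} [Group G] [TopologicalSpace X] [MeasurableSpace X]
    (α : G → X → X) (μ : Measure X) (ρ : X → X → ℝ) (d : ℕ → ℕ)
    (σ : ∀ i, G → Equiv.Perm (Fin (d i))) : EReal :=
  ⨆ (ε : ℝ) (_ : 0 < ε), ⨅ (F : Finset G) (_ : F.Nonempty),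
    ⨅ (L : Finset C(X, ℝ)) (_ : L.Nonempty), ⨅ (δ : ℝ) (_ : 0 < δ),
      Filter.limsup (fun i =>
        if (MapMuSet α μ ρ F L δ (σ i)).Nonempty then
          (((Real.log (Nval ε (MapMuSet α μ ρ F L δ (σ i)) (rhoInf ρ))) / (d i : ℝ) : ℝ) : EReal)
        else (⊥ : EReal)) atTop

def IsInvProb {G X : Type*} [Group G] [MeasurableSpace X]
    (α : G → X → X) (μ : Measure X) : Prop :=
  IsProbabilityMeasure μ ∧ ∀ s : G, Measure.map (α s) μ = μ

noncomputable def Kval {G X : Type*} [Group G] (α : G → X → X) (f : X → ℝ)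
    (ρ : X → X → ℝ) (ε : ℝ) (F : Finset G) : ℝ :=
  sSup {r : ℝ | ∃ D : Finset X,
    (∀ x ∈ D, ∀ y ∈ D, x ≠ y → ε ≤ ⨆ s ∈ F, ρ (α s x) (α s y)) ∧
    r = ∑ x ∈ D, Real.exp (∑ s ∈ F, f (α s x))}

def IsFolnerSeq (G : Type*) [Group G] [DecidableEq G] (Fol : ℕ → Finset G) : Prop :=
  (∀ n, (Fol n).Nonempty) ∧ ∀ s : G,
    Tendsto (fun n =>
      (((((Fol n).image fun t => s * t) \ Fol n) ∪ (Fol n \ ((Fol n).image fun t => s * t))).card : ℝ)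
        / ((Fol n).card : ℝ)) atTop (nhds 0)

theorem _root_.Real.sum_rpow_mul_rpow_one_sub_le {ι : Type*} (s : Finset ι) {u v : ι → ℝ}
    (hu : ∀ i ∈ s, 0 ≤ u i) (hv : ∀ i ∈ s, 0 ≤ v i) {p : ℝ} (hp0 : 0 < p) (hp1 : p < 1) :
    ∑ i ∈ s, u i ^ p * v i ^ (1 - p) ≤ (∑ i ∈ s, u i) ^ p * (∑ i ∈ s, v i) ^ (1 - p) := by
  have hq : 0 < 1 - p := by linarith
  have holder := Real.inner_le_Lp_mul_Lq_of_nonneg s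
    (Real.holderConjugate_one_div hp0 hq (by ring))
    (fun i hi => Real.rpow_nonneg (hu i hi) p) (fun i hi => Real.rpow_nonneg (hv i hi) (1 - p))
  have hpow : ∀ {r : ℝ}, 0 < r → ∀ {w : ι → ℝ}, (∀ i ∈ s, 0 ≤ w i) →
      (∑ i ∈ s, (w i ^ r) ^ (1 / r)) ^ (1 / (1 / r)) = (∑ i ∈ s, w i) ^ r := by
    intro r hr w hw
    rw [one_div_one_div]
    congr 1
    refine Finset.sum_congr rfl fun i hi => ?_
    rw [← Real.rpow_mul (hw i hi), mul_one_div_cancel hr.ne', Real.rpow_one]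
  rwa [hpow hp0 hu, hpow hq hv] at holder

theorem _root_.EReal.le_coe_mul_add_coe_mul_of_forall_gt {p q : ℝ} (hp : 0 < p) (hq : 0 < q)
    {A B x : EReal} (h₁ : A ≠ ⊥ ∨ B ≠ ⊤) (h₂ : A ≠ ⊤ ∨ B ≠ ⊥)
    (h : ∀ a > A, ∀ b > B, x ≤ p * a + q * b) : x ≤ p * A + q * B := by
  have hp' : (0 : EReal) < p := EReal.coe_pos.2 hp
  have hq' : (0 : EReal) < q := EReal.coe_pos.2 hq
  refine EReal.le_add_of_forall_gt ?_ ?_ fun a ha b hb => ?_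
  · simpa [EReal.mul_eq_bot, EReal.mul_eq_top, hp, hq, hp'.not_gt, hq'.not_gt] using h₁
  · simpa [EReal.mul_eq_bot, EReal.mul_eq_top, hp, hq, hp'.not_gt, hq'.not_gt] using h₂
  have key := h (a / p) ((EReal.lt_div_iff hp' (EReal.coe_ne_top p)).2 (by rwa [mul_comm]))
    (b / q) ((EReal.lt_div_iff hq' (EReal.coe_ne_top q)).2 (by rwa [mul_comm]))
  rwa [EReal.mul_div_cancel (EReal.coe_ne_bot p) (EReal.coe_ne_top p) hp'.ne',
    EReal.mul_div_cancel (EReal.coe_ne_bot q) (EReal.coe_ne_top q) hq'.ne'] at key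

theorem _root_.Real.log_div_le_log_of_le_pow {M K : ℝ} {d : ℕ} (hM : 0 ≤ M) (hK : 1 ≤ K)
    (hMK : M ≤ K ^ d) : Real.log M / d ≤ Real.log K := by
  have hlogK : 0 ≤ Real.log K := Real.log_nonneg hK
  rcases Nat.eq_zero_or_pos d with rfl | hd
  · simpa using hlogK
  rw [div_le_iff₀ (by exact_mod_cast hd), mul_comm, ← Real.log_pow]
  rcases hM.eq_or_lt with rfl | hM
  · simpa using Real.log_nonneg (one_le_pow₀ hK)
  · exact Real.log_le_log hM hMK

/-- Sending each map to a nearest point of a finite `ε / 4`-net is injective on an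
`ε`-separated family. -/
theorem exists_card_le_pow_of_pairwise_le_rhoInf {X : Type*} [TopologicalSpace X]
    [CompactSpace X] {ρ : X → X → ℝ} (hρ : IsContPseudoMetric X ρ) {ε : ℝ} (hε : 0 < ε) :
    ∃ N : ℕ, ∀ (d : ℕ) (E : Finset (Fin d → X)),
      (E : Set (Fin d → X)).Pairwise (fun φ ψ => ε ≤ rhoInf ρ φ ψ) → E.card ≤ N ^ d := by
  obtain ⟨t, ht⟩ := isCompact_univ.elim_finite_subcover (fun x : X => {y | ρ x y < ε / 4})
    (fun x => isOpen_lt (hρ.cont.comp (Continuous.prodMk_right x)) continuous_const)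
    (fun y _ => Set.mem_iUnion.2 ⟨y, by simp [hρ.refl y]; linarith⟩)
  have hnet : ∀ y, ∃ x : t, ρ x y < ε / 4 := fun y => by simpa using ht (Set.mem_univ y)
  choose c hc using hnet
  refine ⟨t.card, fun d E hE => ?_⟩
  have hinj : Set.InjOn (fun φ : Fin d → X => c ∘ φ) E := by
    intro φ hφ ψ hψ hcφψ
    by_contra hne
    have hclose : rhoInf ρ φ ψ ≤ ε / 2 := by
      refine Real.iSup_le (fun a => ?_) (by positivity)
      have hφa := hc (φ a)
      rw [show c (φ a) = c (ψ a) from congrFun hcφψ a] at hφa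
      linarith [hc (ψ a), hρ.triangle (φ a) (c (ψ a)) (ψ a), hρ.symm (φ a) (c (ψ a))]
    linarith [hE hφ hψ hne]
  calc E.card ≤ (Finset.univ : Finset (Fin d → t)).card :=
        Finset.card_le_card_of_injOn _ (fun _ _ => Finset.mem_coe.2 (Finset.mem_univ _)) hinj
    _ = t.card ^ d := by simp

theorem MapSet_anti {G X : Type*} [Group G] (α : G → X → X) (ρ : X → X → ℝ) {d : ℕ}
    (σ : G → Equiv.Perm (Fin d)) {F F' : Finset G} {δ δ' : ℝ} (hF : F ⊆ F') (hδ : δ' ≤ δ) :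
    MapSet α ρ F' δ' σ ⊆ MapSet α ρ F δ σ :=
  fun _ hφ s hs => (hφ s (hF hs)).trans_le hδ

/-- `Mval α f ρ ε F δ σ sepd` is, by definition, the `sSup` of this set. -/
def MvalSet {G X : Type*} [Group G] (α : G → X → X) (f : X → ℝ) (ρ : X → X → ℝ) (ε : ℝ)
    (F : Finset G) (δ : ℝ) {d : ℕ} (σ : G → Equiv.Perm (Fin d))
    (sepd : (Fin d → X) → (Fin d → X) → ℝ) : Set ℝ :=
  {r | ∃ E : Finset (Fin d → X), ↑E ⊆ MapSet α ρ F δ σ ∧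
    (E : Set (Fin d → X)).Pairwise (fun φ ψ => ε ≤ sepd φ ψ) ∧
    r = ∑ φ ∈ E, Real.exp (∑ a, f (φ a))}

section Mval

variable {G X : Type*} [Group G] {α : G → X → X} {ρ : X → X → ℝ} {ε : ℝ} {d : ℕ}
  {σ : G → Equiv.Perm (Fin d)} {sepd : (Fin d → X) → (Fin d → X) → ℝ} {f g : X → ℝ}
  {F F₁ F₂ : Finset G} {δ δ₁ δ₂ : ℝ} {p : ℝ}

theorem zero_mem_MvalSet : (0 : ℝ) ∈ MvalSet α f ρ ε F δ σ sepd :=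
  ⟨∅, by simp, by simp, by simp⟩

theorem Mval_nonneg : 0 ≤ Mval α f ρ ε F δ σ sepd :=
  Real.sSup_nonneg' ⟨0, zero_mem_MvalSet, le_rfl⟩

theorem Mval_le {c : ℝ} (hc : c ∈ upperBounds (MvalSet α f ρ ε F δ σ sepd)) :
    Mval α f ρ ε F δ σ sepd ≤ c :=
  csSup_le ⟨0, zero_mem_MvalSet⟩ hc

theorem sum_exp_le_Mval (hB : BddAbove (MvalSet α f ρ ε F δ σ sepd))
    {E : Finset (Fin d → X)} (hE : ↑E ⊆ MapSet α ρ F δ σ)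
    (hsep : (E : Set (Fin d → X)).Pairwise (fun φ ψ => ε ≤ sepd φ ψ)) :
    ∑ φ ∈ E, Real.exp (∑ a, f (φ a)) ≤ Mval α f ρ ε F δ σ sepd :=
  le_csSup hB ⟨E, hE, hsep, rfl⟩

theorem Mval_pos (hB : BddAbove (MvalSet α f ρ ε F δ σ sepd))
    (hne : (MapSet α ρ F δ σ).Nonempty) : 0 < Mval α f ρ ε F δ σ sepd := by
  obtain ⟨φ, hφ⟩ := hne
  calc 0 < Real.exp (∑ a, f (φ a)) := Real.exp_pos _
    _ = ∑ ψ ∈ {φ}, Real.exp (∑ a, f (ψ a)) := by simp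
    _ ≤ _ := sum_exp_le_Mval hB (by simpa using hφ) (by simp)

theorem Mval_mono (hB : BddAbove (MvalSet α f ρ ε F₁ δ₁ σ sepd))
    (hsub : MapSet α ρ F δ σ ⊆ MapSet α ρ F₁ δ₁ σ) :
    Mval α f ρ ε F δ σ sepd ≤ Mval α f ρ ε F₁ δ₁ σ sepd :=
  Mval_le fun _ ⟨_, hE, hsep, hr⟩ => hr ▸ sum_exp_le_Mval hB (hE.trans hsub) hsep

theorem MvalSet_convex_le (hBf : BddAbove (MvalSet α f ρ ε F δ σ sepd))
    (hBg : BddAbove (MvalSet α g ρ ε F δ σ sepd)) (hp0 : 0 < p) (hp1 : p < 1) :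
    (Mval α f ρ ε F δ σ sepd) ^ p * (Mval α g ρ ε F δ σ sepd) ^ (1 - p) ∈
      upperBounds (MvalSet α (fun x => p * f x + (1 - p) * g x) ρ ε F δ σ sepd) := by
  rintro _ ⟨E, hE, hsep, rfl⟩
  have hexp : ∀ φ : Fin d → X, Real.exp (∑ a, (p * f (φ a) + (1 - p) * g (φ a))) =
      Real.exp (∑ a, f (φ a)) ^ p * Real.exp (∑ a, g (φ a)) ^ (1 - p) := fun φ => by
    rw [Finset.sum_add_distrib, ← Finset.mul_sum, ← Finset.mul_sum, Real.exp_add,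
      ← Real.exp_mul, ← Real.exp_mul, mul_comm p, mul_comm (1 - p)]
  simp_rw [hexp]
  refine (Real.sum_rpow_mul_rpow_one_sub_le E (fun _ _ => (Real.exp_pos _).le)
    (fun _ _ => (Real.exp_pos _).le) hp0 hp1).trans ?_
  gcongr
  · exact Real.rpow_nonneg Mval_nonneg _
  · exact sum_exp_le_Mval hBf hE hsep
  · exact sum_exp_le_Mval hBg hE hsep

theorem log_Mval_convex_le (hBf : ∀ F δ, BddAbove (MvalSet α f ρ ε F δ σ sepd))
    (hBg : ∀ F δ, BddAbove (MvalSet α g ρ ε F δ σ sepd)) (hp0 : 0 < p) (hp1 : p < 1)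
    (hF₁ : F₁ ⊆ F) (hF₂ : F₂ ⊆ F) (hδ₁ : δ ≤ δ₁) (hδ₂ : δ ≤ δ₂)
    (hne : (MapSet α ρ F δ σ).Nonempty) :
    Real.log (Mval α (fun x => p * f x + (1 - p) * g x) ρ ε F δ σ sepd) ≤
      p * Real.log (Mval α f ρ ε F₁ δ₁ σ sepd) +
        (1 - p) * Real.log (Mval α g ρ ε F₂ δ₂ σ sepd) := by
  have hMf := Mval_pos (hBf F δ) hne
  have hMg := Mval_pos (hBg F δ) hne
  have hholder := MvalSet_convex_le (hBf F δ) (hBg F δ) hp0 hp1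
  calc Real.log (Mval α (fun x => p * f x + (1 - p) * g x) ρ ε F δ σ sepd)
      ≤ Real.log (Mval α f ρ ε F δ σ sepd ^ p * Mval α g ρ ε F δ σ sepd ^ (1 - p)) :=
        Real.log_le_log (Mval_pos ⟨_, hholder⟩ hne) (Mval_le hholder)
    _ = p * Real.log (Mval α f ρ ε F δ σ sepd) +
          (1 - p) * Real.log (Mval α g ρ ε F δ σ sepd) := by
        rw [Real.log_mul (Real.rpow_pos_of_pos hMf _).ne' (Real.rpow_pos_of_pos hMg _).ne',
          Real.log_rpow hMf, Real.log_rpow hMg]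
    _ ≤ _ := by
        have hq : 0 ≤ 1 - p := by linarith
        gcongr
        · exact Mval_mono (hBf F₁ δ₁) (MapSet_anti α ρ σ hF₁ hδ₁)
        · exact Mval_mono (hBg F₂ δ₂) (MapSet_anti α ρ σ hF₂ hδ₂)

end Mval

theorem exists_MvalSet_rhoInf_le_pow {G X : Type*} [Group G] [TopologicalSpace X]
    [CompactSpace X] (α : G → X → X) {ρ : X → X → ℝ} (hρ : IsContPseudoMetric X ρ) {ε : ℝ}
    (hε : 0 < ε) {f : X → ℝ} (hf : BddAbove (Set.range f)) :
    ∃ K : ℝ, 1 ≤ K ∧ ∀ (F : Finset G) (δ : ℝ) {d : ℕ} (σ : G → Equiv.Perm (Fin d)),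
      K ^ d ∈ upperBounds (MvalSet α f ρ ε F δ σ (rhoInf ρ)) := by
  obtain ⟨N, hN⟩ := exists_card_le_pow_of_pairwise_le_rhoInf hρ hε
  obtain ⟨C, hC⟩ := hf
  refine ⟨((N : ℝ) + 1) * Real.exp |C|, one_le_mul_of_one_le_of_one_le
    (by linarith [N.cast_nonneg (α := ℝ)]) (Real.one_le_exp (abs_nonneg C)), fun F δ d σ => ?_⟩
  rintro _ ⟨E, -, hsep, rfl⟩
  have hterm : ∀ φ ∈ E, Real.exp (∑ a, f (φ a)) ≤ Real.exp |C| ^ d := fun φ _ => by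
    rw [← Real.exp_nat_mul]
    gcongr
    calc ∑ a, f (φ a) ≤ Finset.univ.card • |C| :=
          Finset.sum_le_card_nsmul _ _ _ fun a _ => (hC ⟨φ a, rfl⟩).trans (le_abs_self C)
      _ = d * |C| := by simp
  calc ∑ φ ∈ E, Real.exp (∑ a, f (φ a)) ≤ E.card • Real.exp |C| ^ d :=
        Finset.sum_le_card_nsmul _ _ _ hterm
    _ ≤ ((N : ℝ) + 1) ^ d * Real.exp |C| ^ d := by
        rw [nsmul_eq_mul]
        gcongr
        exact_mod_cast (hN d E hsep).trans (Nat.pow_le_pow_left N.le_succ d)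
    _ = _ := (mul_pow _ _ _).symm

theorem bddAbove_MvalSet_rhoInf {G X : Type*} [Group G] [TopologicalSpace X] [CompactSpace X]
    (α : G → X → X) {ρ : X → X → ℝ} (hρ : IsContPseudoMetric X ρ) {ε : ℝ} (hε : 0 < ε)
    {f : X → ℝ} (hf : BddAbove (Set.range f)) (F : Finset G) (δ : ℝ) {d : ℕ}
    (σ : G → Equiv.Perm (Fin d)) : BddAbove (MvalSet α f ρ ε F δ σ (rhoInf ρ)) := by
  obtain ⟨_, -, hK⟩ := exists_MvalSet_rhoInf_le_pow α hρ hε hf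
  exact ⟨_, hK F δ σ⟩

section Pressure

variable {G X : Type*} [Group G] (α : G → X → X) (ρ : X → X → ℝ) (d : ℕ → ℕ)
  (σ : ∀ i, G → Equiv.Perm (Fin (d i)))

noncomputable def pressureApprox (f : X → ℝ) (ε : ℝ) (F : Finset G) (δ : ℝ) (i : ℕ) : EReal :=
  if (MapSet α ρ F δ (σ i)).Nonempty then
    ((Real.log (Mval α f ρ ε F δ (σ i) (rhoInf ρ)) / (d i : ℝ) : ℝ) : EReal)
  else ⊥

noncomputable def pressureAtScale (f : X → ℝ) (ε : ℝ) : EReal :=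
  ⨅ (F : Finset G) (_ : F.Nonempty), ⨅ (δ : ℝ) (_ : 0 < δ),
    limsup (pressureApprox α ρ d σ f ε F δ) atTop

theorem PressureInf_eq_iSup_pressureAtScale (f : X → ℝ) :
    PressureInf α f ρ d σ = ⨆ (ε : ℝ) (_ : 0 < ε), pressureAtScale α ρ d σ f ε := rfl

theorem pressureAtScale_le_PressureInf (f : X → ℝ) {ε : ℝ} (hε : 0 < ε) :
    pressureAtScale α ρ d σ f ε ≤ PressureInf α f ρ d σ :=
  le_iSup₂ (f := fun ε (_ : 0 < ε) => pressureAtScale α ρ d σ f ε) ε hε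

variable {α ρ d σ} [TopologicalSpace X] [CompactSpace X] {f g : X → ℝ} {ε : ℝ}

theorem pressureAtScale_ne_top (hρ : IsContPseudoMetric X ρ) (hf : BddAbove (Set.range f))
    (hε : 0 < ε) : pressureAtScale α ρ d σ f ε ≠ ⊤ := by
  obtain ⟨K, hK, hMK⟩ := exists_MvalSet_rhoInf_le_pow α hρ hε hf
  refine ne_top_of_le_ne_top (EReal.coe_ne_top (Real.log K)) ?_
  refine (iInf₂_le {1} (Finset.singleton_nonempty 1)).trans ((iInf₂_le 1 one_pos).trans ?_)
  refine limsup_le_of_le (by isBoundedDefault) (Eventually.of_forall fun i => ?_)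
  unfold pressureApprox
  split_ifs
  · exact EReal.coe_le_coe_iff.2
      (Real.log_div_le_log_of_le_pow Mval_nonneg hK (Mval_le (hMK _ _ _)))
  · exact bot_le

theorem pressureApprox_convex_le (hρ : IsContPseudoMetric X ρ) (hf : BddAbove (Set.range f))
    (hg : BddAbove (Set.range g)) (hε : 0 < ε) {p : ℝ} (hp0 : 0 < p) (hp1 : p < 1)
    {F F₁ F₂ : Finset G} {δ δ₁ δ₂ : ℝ} (hF₁ : F₁ ⊆ F) (hF₂ : F₂ ⊆ F) (hδ₁ : δ ≤ δ₁)
    (hδ₂ : δ ≤ δ₂) (i : ℕ) :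
    pressureApprox α ρ d σ (fun x => p * f x + (1 - p) * g x) ε F δ i ≤
      p * pressureApprox α ρ d σ f ε F₁ δ₁ i +
        ((1 - p : ℝ) : EReal) * pressureApprox α ρ d σ g ε F₂ δ₂ i := by
  unfold pressureApprox
  by_cases hne : (MapSet α ρ F δ (σ i)).Nonempty
  · rw [if_pos hne, if_pos (hne.mono (MapSet_anti α ρ (σ i) hF₁ hδ₁)),
      if_pos (hne.mono (MapSet_anti α ρ (σ i) hF₂ hδ₂)), ← EReal.coe_mul, ← EReal.coe_mul,
      ← EReal.coe_add, EReal.coe_le_coe_iff]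
    have hlog := log_Mval_convex_le (bddAbove_MvalSet_rhoInf α hρ hε hf · · (σ i))
      (bddAbove_MvalSet_rhoInf α hρ hε hg · · (σ i)) hp0 hp1 hF₁ hF₂ hδ₁ hδ₂ hne
    calc _ ≤ (p * Real.log (Mval α f ρ ε F₁ δ₁ (σ i) (rhoInf ρ)) +
            (1 - p) * Real.log (Mval α g ρ ε F₂ δ₂ (σ i) (rhoInf ρ))) / d i :=
          div_le_div_of_nonneg_right hlog (Nat.cast_nonneg _)
      _ = _ := by ring
  · rw [if_neg hne]
    exact bot_le

theorem pressureAtScale_convex_le (hρ : IsContPseudoMetric X ρ) (hf : BddAbove (Set.range f))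
    (hg : BddAbove (Set.range g)) (hε : 0 < ε) {p : ℝ} (hp0 : 0 < p) (hp1 : p < 1) :
    pressureAtScale α ρ d σ (fun x => p * f x + (1 - p) * g x) ε ≤
      p * pressureAtScale α ρ d σ f ε + ((1 - p : ℝ) : EReal) * pressureAtScale α ρ d σ g ε := by
  refine EReal.le_coe_mul_add_coe_mul_of_forall_gt hp0 (sub_pos.2 hp1)
    (Or.inr (pressureAtScale_ne_top hρ hg hε)) (Or.inl (pressureAtScale_ne_top hρ hf hε))
    fun a ha b hb => ?_
  obtain ⟨F₁, hF₁, δ₁, hδ₁, h₁⟩ : ∃ F₁ : Finset G, F₁.Nonempty ∧ ∃ δ₁ > 0,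
      limsup (pressureApprox α ρ d σ f ε F₁ δ₁) atTop < a := by
    simpa only [pressureAtScale, iInf_lt_iff, exists_prop] using ha
  obtain ⟨F₂, -, δ₂, hδ₂, h₂⟩ : ∃ F₂ : Finset G, F₂.Nonempty ∧ ∃ δ₂ > 0,
      limsup (pressureApprox α ρ d σ g ε F₂ δ₂) atTop < b := by
    simpa only [pressureAtScale, iInf_lt_iff, exists_prop] using hb
  refine (iInf₂_le (F₁ ∪ F₂) (hF₁.mono Finset.subset_union_left)).trans
    ((iInf₂_le (min δ₁ δ₂) (lt_min hδ₁ hδ₂)).trans (limsup_le_of_le (by isBoundedDefault) ?_))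
  filter_upwards [eventually_lt_of_limsup_lt h₁, eventually_lt_of_limsup_lt h₂] with i hi₁ hi₂
  refine (pressureApprox_convex_le hρ hf hg hε hp0 hp1 Finset.subset_union_left
    Finset.subset_union_right (min_le_left _ _) (min_le_right _ _) i).trans ?_
  gcongr

end Pressure

theorem stmt16_general {G : Type*} [Group G]
    {X : Type*} [TopologicalSpace X] [CompactSpace X]
    (α : G → X → X)
    (d : ℕ → ℕ) (σ : ∀ i, G → Equiv.Perm (Fin (d i)))
    (ρ : X → X → ℝ) (hρ : IsCompatMetric X ρ)
    (f g : X → ℝ) (hf : Continuous f) (hg : Continuous g)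
    (p : ℝ) (hp0 : 0 ≤ p) (hp1 : p ≤ 1) :
    PressureInf α (fun x => p * f x + (1 - p) * g x) ρ d σ ≤
      (p : EReal) * PressureInf α f ρ d σ + ((1 - p : ℝ) : EReal) * PressureInf α g ρ d σ := by
  rcases hp0.eq_or_lt with rfl | hp0
  · simp
  rcases hp1.eq_or_lt with rfl | hp1
  · simp
  rw [PressureInf_eq_iSup_pressureAtScale α ρ d σ (fun x => p * f x + (1 - p) * g x)]
  refine iSup₂_le fun ε hε => (pressureAtScale_convex_le hρ.toIsContPseudoMetric
    (isCompact_range hf).bddAbove (isCompact_range hg).bddAbove hε hp0 hp1).trans ?_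
  gcongr <;> exact pressureAtScale_le_PressureInf α ρ d σ _ hε

theorem stmt16 {G : Type*} [Group G] [Countable G]
    {X : Type*} [TopologicalSpace X] [CompactSpace X] [TopologicalSpace.MetrizableSpace X]
    (α : G → X → X) (hα : ContAction G X α)
    (d : ℕ → ℕ) (σ : ∀ i, G → Equiv.Perm (Fin (d i))) (hσ : IsSoficApprox G d σ)
    (ρ : X → X → ℝ) (hρ : IsCompatMetric X ρ)
    (hfin : PressureInf α (fun _ => (0 : ℝ)) ρ d σ ≠ (⊥ : EReal) ∧
      PressureInf α (fun _ => (0 : ℝ)) ρ d σ ≠ (⊤ : EReal))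
    (f g : X → ℝ) (hf : Continuous f) (hg : Continuous g)
    (p : ℝ) (hp0 : 0 ≤ p) (hp1 : p ≤ 1) :
    PressureInf α (fun x => p * f x + (1 - p) * g x) ρ d σ ≤
      (p : EReal) * PressureInf α f ρ d σ + ((1 - p : ℝ) : EReal) * PressureInf α g ρ d σ :=
  stmt16_general α d σ ρ hρ f g hf hg p hp0 hp1

end Sofic
end

section
/- Let α be a continuous action of a countable sofic group G on a compact metrizable space X with sofic approximation sequence Σ, and assume h_Σ(X,G) = P_Σ(0,X,G) ≠ ±∞ (so that P_Σ(·,X,G) is finite valued). Let μ : B(X) → ℝ be a finite signed measure on the Borel σ-algebra B(X) of X. If ∫_X f dμ ≤ P_Σ(f, X, G) for all continuous f : X → ℝ, then μ is a G-invariant Borel probability measure on X, i.e. μ ∈ M_G(X). -/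
/-!
Write `Λ g = ∫ g dμ`. If every good enough microstate has `f`-sum at most `d * c`, then
`P(f) ≤ P(0) + c`. This applies to constants `c`, to `-t g` with `g ≥ 0` and `c = 0`, and to
coboundaries `t (g ∘ α s - g)` with `c = 1`, whose sum over a microstate `φ` telescopes since
`σ s` is a permutation and `α s ∘ φ ≈ φ ∘ σ s`. As `P(0)` is finite, `Λ ≤ P` then gives bounds
`t * a ≤ const` for all `t`, which force `Λ 1 = 1`, `Λ g ≥ 0` for `g ≥ 0`, and
`Λ (g ∘ α s) = Λ g`. Finite Borel measures on a metrizable space are determined by, and compared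
through, their integrals of bounded continuous functions, which turns these into the claims on `μ`.
-/

open Filter MeasureTheory
open scoped Pointwise Classical BigOperators

open scoped NNReal ENNReal BoundedContinuousFunction

theorem MeasureTheory.Measure.le_of_forall_lintegral_le {Ω : Type*} [MeasurableSpace Ω]
    [TopologicalSpace Ω] [TopologicalSpace.PseudoMetrizableSpace Ω] [BorelSpace Ω]
    {μ ν : Measure Ω} [IsFiniteMeasure μ] [IsFiniteMeasure ν]
    (h : ∀ f : Ω →ᵇ ℝ≥0, ∫⁻ x, f x ∂μ ≤ ∫⁻ x, f x ∂ν) : μ ≤ ν := by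
  have closed_le : ∀ C : Set Ω, IsClosed C → μ C ≤ ν C := fun C hC =>
    ge_of_tendsto' (HasOuterApproxClosed.tendsto_lintegral_apprSeq hC ν)
      fun n => (HasOuterApproxClosed.measure_le_lintegral hC μ n).trans (h _)
  refine Measure.le_iff.2 fun A hA => ENNReal.le_of_forall_pos_le_add fun ε hε _ => ?_
  obtain ⟨C, hCA, hC, hμC⟩ := hA.exists_isClosed_lt_add (μ := μ) (measure_ne_top μ A)
    (ENNReal.coe_pos.2 hε).ne'
  calc μ A ≤ μ C + ε := hμC.le
    _ ≤ ν A + ε := add_le_add_left ((closed_le C hC).trans (measure_mono hCA)) _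

noncomputable def EReal.addRightOrderIso (c : ℝ) : EReal ≃o EReal where
  toFun x := x + c
  invFun x := x - c
  left_inv _ := EReal.add_sub_cancel_right
  right_inv _ := EReal.sub_add_cancel
  map_rel_iff' := (EReal.addLECancellable_coe c).add_le_add_iff_right

@[simp] theorem EReal.addRightOrderIso_apply (c : ℝ) (x : EReal) :
    EReal.addRightOrderIso c x = x + c := rfl

theorem eq_zero_of_forall_mul_le {a b : ℝ} (h : ∀ t, t * a ≤ b) : a = 0 := by
  by_contra ha
  have := h ((|b| + 1) / a)
  rw [div_mul_cancel₀ _ ha] at this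
  linarith [le_abs_self b]

theorem nonneg_of_forall_nonneg_neg_mul_le {a b : ℝ} (h : ∀ t, 0 ≤ t → -(t * a) ≤ b) :
    0 ≤ a := by
  by_contra! ha
  have := h ((|b| + 1) / -a) (div_nonneg (by positivity) (neg_nonneg.2 ha.le))
  have hta : (|b| + 1) / -a * a = -(|b| + 1) := by
    rw [div_neg, neg_mul, div_mul_cancel₀ _ ha.ne]
  linarith [le_abs_self b]

namespace MeasureTheory.SignedMeasure

variable {X : Type*} [MeasurableSpace X] (μ : SignedMeasure X)

noncomputable def jordanIntegral (g : X → ℝ) : ℝ :=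
  ∫ x, g x ∂μ.toJordanDecomposition.posPart - ∫ x, g x ∂μ.toJordanDecomposition.negPart

theorem jordanIntegral_const (c : ℝ) : μ.jordanIntegral (fun _ => c) = c * μ Set.univ := by
  rw [jordanIntegral, integral_const, integral_const,
    μ.apply_eq_posPart_real_sub_negPart_real MeasurableSet.univ, smul_eq_mul, smul_eq_mul]
  ring

theorem jordanIntegral_const_mul (t : ℝ) (g : X → ℝ) :
    μ.jordanIntegral (fun x => t * g x) = t * μ.jordanIntegral g := by
  simp only [jordanIntegral, integral_const_mul, mul_sub]

theorem jordanIntegral_sub [TopologicalSpace X] [CompactSpace X] [OpensMeasurableSpace X]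
    {g h : X → ℝ} (hg : Continuous g) (hh : Continuous h) :
    μ.jordanIntegral (fun x => g x - h x) = μ.jordanIntegral g - μ.jordanIntegral h := by
  have hint : ∀ {k : X → ℝ}, Continuous k → ∀ (ν : Measure X) [IsFiniteMeasure ν], Integrable k ν :=
    fun hk _ _ => hk.integrable_of_hasCompactSupport (HasCompactSupport.of_compactSpace _)
  simp only [jordanIntegral]
  rw [integral_sub (hint hg _) (hint hh _), integral_sub (hint hg _) (hint hh _)]
  ring

variable [TopologicalSpace X] [TopologicalSpace.PseudoMetrizableSpace X] [BorelSpace X]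

theorem apply_nonneg_of_jordanIntegral_nonneg
    (h : ∀ f : X →ᵇ ℝ≥0, 0 ≤ μ.jordanIntegral fun x => f x) {A : Set X} (hA : MeasurableSet A) :
    0 ≤ μ A := by
  have hle : μ.toJordanDecomposition.negPart ≤ μ.toJordanDecomposition.posPart :=
    Measure.le_of_forall_lintegral_le fun f => by
      rw [lintegral_coe_eq_integral _ (f.integrable_of_nnreal _),
        lintegral_coe_eq_integral _ (f.integrable_of_nnreal _)]
      exact ENNReal.ofReal_le_ofReal (sub_nonneg.1 (h f))
  rw [μ.apply_eq_posPart_real_sub_negPart_real hA, sub_nonneg]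
  exact ENNReal.toReal_mono (measure_ne_top _ _) (hle A)

theorem apply_preimage_eq_of_jordanIntegral_comp {T : X → X} (hT : Measurable T)
    (h : ∀ f : X →ᵇ ℝ, μ.jordanIntegral (fun x => f (T x)) = μ.jordanIntegral f)
    {A : Set X} (hA : MeasurableSet A) : μ (T ⁻¹' A) = μ A := by
  set pos := μ.toJordanDecomposition.posPart
  set neg := μ.toJordanDecomposition.negPart
  have hmap : pos.map T + neg = neg.map T + pos :=
    ext_of_forall_integral_eq_of_IsFiniteMeasure fun f => by
      have hf := h f
      simp only [jordanIntegral] at hf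
      rw [integral_add_measure (f.integrable _) (f.integrable _),
        integral_add_measure (f.integrable _) (f.integrable _),
        integral_map hT.aemeasurable f.continuous.aestronglyMeasurable,
        integral_map hT.aemeasurable f.continuous.aestronglyMeasurable]
      linarith
  have hA' := congrArg (fun ν : Measure X => ν.real A) hmap
  rw [measureReal_add_apply, measureReal_add_apply, map_measureReal_apply hT hA,
    map_measureReal_apply hT hA] at hA'
  rw [μ.apply_eq_posPart_real_sub_negPart_real hA,
    μ.apply_eq_posPart_real_sub_negPart_real (hT hA)]
  linarith

end MeasureTheory.SignedMeasure

namespace Sofic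

section Metric

variable {X : Type*} {ρ : X → X → ℝ}

theorem rhoInf_lt {d : ℕ} {φ ψ : Fin d → X} {ε : ℝ} (hε : 0 < ε)
    (h : ∀ a, ρ (φ a) (ψ a) < ε) : rhoInf ρ φ ψ < ε := by
  rcases isEmpty_or_nonempty (Fin d) with _ | _
  · simpa [rhoInf] using hε
  · obtain ⟨a, ha⟩ := Finite.exists_max fun a => ρ (φ a) (ψ a)
    exact (ciSup_le ha).trans_lt (h a)

theorem sum_sq_eq_mul_rho2_sq {d : ℕ} (φ ψ : Fin d → X) :
    ∑ a, ρ (φ a) (ψ a) ^ 2 = d * rho2 ρ φ ψ ^ 2 := by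
  rcases Nat.eq_zero_or_pos d with rfl | hd
  · simp
  rw [rho2, Real.sq_sqrt (by positivity)]
  field_simp

end Metric

section Compact

variable {X : Type*} [TopologicalSpace X] [CompactSpace X] {ρ : X → X → ℝ}

theorem IsContPseudoMetric.exists_finset_forall_exists_lt (hρ : IsContPseudoMetric X ρ) {ε : ℝ}
    (hε : 0 < ε) : ∃ T : Finset X, ∀ x, ∃ t ∈ T, ρ t x < ε := by
  obtain ⟨T, hT⟩ := isCompact_univ.elim_finite_subcover (fun t : X => {y | ρ t y < ε})
    (fun t => isOpen_lt (hρ.cont.comp (Continuous.prodMk_right t)) continuous_const)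
    (fun x _ => Set.mem_iUnion.2 ⟨x, by simp [hρ.refl x, hε]⟩)
  exact ⟨T, fun x => by simpa using hT (Set.mem_univ x)⟩

theorem IsContPseudoMetric.exists_card_le_pow_of_separated (hρ : IsContPseudoMetric X ρ)
    {ε : ℝ} (hε : 0 < ε) : ∃ N : ℕ, ∀ (d : ℕ) (E : Finset (Fin d → X)),
      (∀ φ ∈ E, ∀ ψ ∈ E, φ ≠ ψ → ε ≤ rhoInf ρ φ ψ) → (E.card : ℝ) ≤ (N : ℝ) ^ d := by
  obtain ⟨T, hT⟩ := hρ.exists_finset_forall_exists_lt (half_pos hε)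
  choose center hcenter_mem hcenter using hT
  refine ⟨T.card, fun d E hsep => ?_⟩
  let code : (Fin d → X) → Fin d → T := fun φ a => ⟨center (φ a), hcenter_mem (φ a)⟩
  have hinj : Set.InjOn code E := by
    intro φ hφ ψ hψ hcode
    by_contra hne
    refine (hsep φ hφ ψ hψ hne).not_gt (rhoInf_lt hε fun a => ?_)
    have hc : center (φ a) = center (ψ a) := congrArg Subtype.val (congrFun hcode a)
    have h1 : ρ (φ a) (center (φ a)) < ε / 2 := hρ.symm (φ a) _ ▸ hcenter (φ a)
    have h2 : ρ (center (φ a)) (ψ a) < ε / 2 := hc ▸ hcenter (ψ a)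
    linarith [hρ.triangle (φ a) (center (φ a)) (ψ a)]
  have := Finset.card_le_card_of_injOn code (fun φ _ => Finset.mem_univ _) hinj
  simp only [Finset.card_univ, Fintype.card_fun, Fintype.card_coe, Fintype.card_fin] at this
  exact_mod_cast this

/-- Uniform continuity of `f` with respect to `ρ`, in a form that sums well against `ρ²`. -/
theorem IsCompatMetric.exists_abs_sub_le_add_mul_sq (hρ : IsCompatMetric X ρ) {f : X → ℝ}
    (hf : Continuous f) {η : ℝ} (hη : 0 < η) :
    ∃ C, 0 ≤ C ∧ ∀ x y, |f x - f y| ≤ η + C * ρ x y ^ 2 := by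
  set K := {p : X × X | η ≤ |f p.1 - f p.2|}
  have hdiff : Continuous fun p : X × X => |f p.1 - f p.2| :=
    ((hf.comp continuous_fst).sub (hf.comp continuous_snd)).abs
  have hK : IsCompact K := (isClosed_le continuous_const hdiff).isCompact
  have hρK : ∀ p ∈ K, ρ p.1 p.2 ≠ 0 := fun p hp h0 => by
    have hp : η ≤ |f p.1 - f p.2| := hp
    rw [hρ.eq_of_zero _ _ h0, sub_self, abs_zero] at hp
    exact hp.not_gt hη
  obtain ⟨C, hC⟩ := hK.bddAbove_image (f := fun p => |f p.1 - f p.2| / ρ p.1 p.2 ^ 2)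
    (hdiff.continuousOn.div
      (hρ.cont.pow 2).continuousOn fun p hp => pow_ne_zero 2 (hρK p hp))
  refine ⟨max C 0, le_max_right _ _, fun x y => ?_⟩
  by_cases hxy : (x, y) ∈ K
  · have h1 := hC ⟨(x, y), hxy, rfl⟩
    have h2 := (div_le_iff₀ (pow_pos ((hρ.nonneg x y).lt_of_ne' (hρK _ hxy)) 2)).1 h1
    nlinarith [le_max_left C 0, sq_nonneg (ρ x y)]
  · have : |f x - f y| < η := not_le.1 hxy
    nlinarith [le_max_right C 0, sq_nonneg (ρ x y)]

theorem IsCompatMetric.exists_sum_sub_le_of_rho2_lt (hρ : IsCompatMetric X ρ) {f : X → ℝ}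
    (hf : Continuous f) {η : ℝ} (hη : 0 < η) :
    ∃ δ > 0, ∀ (d : ℕ) (φ ψ : Fin d → X), rho2 ρ φ ψ < δ →
      ∑ a, (f (φ a) - f (ψ a)) ≤ d * η := by
  obtain ⟨C, hC0, hC⟩ := hρ.exists_abs_sub_le_add_mul_sq hf (half_pos hη)
  refine ⟨Real.sqrt (η / (2 * (C + 1))), by positivity, fun d φ ψ hδ => ?_⟩
  have hsq : rho2 ρ φ ψ ^ 2 ≤ η / (2 * (C + 1)) :=
    (Real.le_sqrt (Real.sqrt_nonneg _) (by positivity)).1 hδ.le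
  have hCsq : C * rho2 ρ φ ψ ^ 2 ≤ η / 2 := by
    calc C * rho2 ρ φ ψ ^ 2 ≤ (C + 1) * (η / (2 * (C + 1))) :=
          mul_le_mul (by linarith) hsq (sq_nonneg _) (by linarith)
      _ = η / 2 := by field_simp
  calc ∑ a, (f (φ a) - f (ψ a)) ≤ ∑ a, (η / 2 + C * ρ (φ a) (ψ a) ^ 2) :=
        Finset.sum_le_sum fun a _ => (le_abs_self _).trans (hC _ _)
    _ = d * (η / 2) + C * (d * rho2 ρ φ ψ ^ 2) := by
        rw [Finset.sum_add_distrib, ← Finset.mul_sum, sum_sq_eq_mul_rho2_sq]; simp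
    _ ≤ d * η := by nlinarith [(d.cast_nonneg : (0 : ℝ) ≤ d)]

end Compact

section Pressure

variable {G : Type*} [Group G] {X : Type*} {α : G → X → X} {ρ : X → X → ℝ}

theorem MapSet_mono {F F₀ : Finset G} {δ δ₀ : ℝ} (hF : F₀ ⊆ F) (hδ : δ ≤ δ₀) {d : ℕ}
    (σ : G → Equiv.Perm (Fin d)) : MapSet α ρ F δ σ ⊆ MapSet α ρ F₀ δ₀ σ :=
  fun _ hφ s hs => (hφ s (hF hs)).trans_le hδ

variable [TopologicalSpace X] [CompactSpace X]

theorem bddAbove_sum_exp_of_separated (hρ : IsContPseudoMetric X ρ) {ε : ℝ} (hε : 0 < ε)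
    {f : X → ℝ} (hf : Continuous f) {d : ℕ} (Y : Set (Fin d → X)) :
    BddAbove {r : ℝ | ∃ E : Finset (Fin d → X), ↑E ⊆ Y ∧
      (∀ φ ∈ E, ∀ ψ ∈ E, φ ≠ ψ → ε ≤ rhoInf ρ φ ψ) ∧ r = ∑ φ ∈ E, Real.exp (∑ a, f (φ a))} := by
  obtain ⟨N, hN⟩ := hρ.exists_card_le_pow_of_separated hε
  obtain ⟨B, hB⟩ := (isCompact_range hf).bddAbove
  have hexp : ∀ φ : Fin d → X, Real.exp (∑ a, f (φ a)) ≤ Real.exp (d * B) := fun φ =>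
    Real.exp_le_exp.2 <| by
      simpa using Finset.sum_le_card_nsmul Finset.univ _ _ fun a _ => hB ⟨φ a, rfl⟩
  refine ⟨N ^ d * Real.exp (d * B), ?_⟩
  rintro r ⟨E, -, hsep, rfl⟩
  calc ∑ φ ∈ E, Real.exp (∑ a, f (φ a)) ≤ E.card * Real.exp (d * B) := by
        simpa using Finset.sum_le_card_nsmul E _ _ fun φ _ => hexp φ
    _ ≤ N ^ d * Real.exp (d * B) := by gcongr; exact hN d E hsep

theorem exp_sum_le_Mval (hρ : IsContPseudoMetric X ρ) {ε : ℝ} (hε : 0 < ε) {f : X → ℝ}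
    (hf : Continuous f) {F : Finset G} {δ : ℝ} {d : ℕ} {σ : G → Equiv.Perm (Fin d)}
    {φ : Fin d → X} (hφ : φ ∈ MapSet α ρ F δ σ) :
    Real.exp (∑ a, f (φ a)) ≤ Mval α f ρ ε F δ σ (rhoInf ρ) :=
  le_csSup (bddAbove_sum_exp_of_separated hρ hε hf _) ⟨{φ}, by simpa using hφ, by simp, by simp⟩

theorem Mval_le_exp_mul_Mval_zero (hρ : IsContPseudoMetric X ρ) {ε : ℝ} (hε : 0 < ε)
    {f : X → ℝ} {F F₀ : Finset G} {δ δ₀ : ℝ} {d : ℕ} {σ : G → Equiv.Perm (Fin d)}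
    (hsub : MapSet α ρ F δ σ ⊆ MapSet α ρ F₀ δ₀ σ) {c : ℝ}
    (hbound : ∀ φ ∈ MapSet α ρ F δ σ, ∑ a, f (φ a) ≤ d * c) :
    Mval α f ρ ε F δ σ (rhoInf ρ) ≤
      Real.exp (d * c) * Mval α (fun _ => 0) ρ ε F₀ δ₀ σ (rhoInf ρ) := by
  refine csSup_le ⟨0, ∅, by simp, by simp, by simp⟩ ?_
  rintro r ⟨E, hE, hsep, rfl⟩
  have hcard : (E.card : ℝ) ≤ Mval α (fun _ => 0) ρ ε F₀ δ₀ σ (rhoInf ρ) :=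
    le_csSup (bddAbove_sum_exp_of_separated hρ hε continuous_const _)
      ⟨E, hE.trans hsub, hsep, by simp⟩
  calc ∑ φ ∈ E, Real.exp (∑ a, f (φ a)) ≤ E.card * Real.exp (d * c) := by
        simpa using Finset.sum_le_card_nsmul E _ _ fun φ hφ => Real.exp_le_exp.2 (hbound φ (hE hφ))
    _ ≤ Real.exp (d * c) * Mval α (fun _ => 0) ρ ε F₀ δ₀ σ (rhoInf ρ) := by
        rw [mul_comm]; gcongr

theorem log_Mval_div_le (hρ : IsContPseudoMetric X ρ) {ε : ℝ} (hε : 0 < ε) {f : X → ℝ}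
    (hf : Continuous f) {F F₀ : Finset G} {δ δ₀ : ℝ} {d : ℕ} (hd : 0 < d)
    {σ : G → Equiv.Perm (Fin d)} (hsub : MapSet α ρ F δ σ ⊆ MapSet α ρ F₀ δ₀ σ)
    (hne : (MapSet α ρ F δ σ).Nonempty) {c : ℝ}
    (hbound : ∀ φ ∈ MapSet α ρ F δ σ, ∑ a, f (φ a) ≤ d * c) :
    Real.log (Mval α f ρ ε F δ σ (rhoInf ρ)) / d ≤
      Real.log (Mval α (fun _ => 0) ρ ε F₀ δ₀ σ (rhoInf ρ)) / d + c := by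
  obtain ⟨φ, hφ⟩ := hne
  have hMf := (Real.exp_pos _).trans_le (exp_sum_le_Mval hρ hε hf hφ)
  have hM0 := (Real.exp_pos _).trans_le
    (exp_sum_le_Mval (f := fun _ => 0) hρ hε continuous_const (hsub hφ))
  have hlog := Real.log_le_log hMf (Mval_le_exp_mul_Mval_zero hρ hε hsub hbound)
  rw [Real.log_mul (Real.exp_ne_zero _) hM0.ne', Real.log_exp] at hlog
  rw [div_add' _ _ _ (by positivity)]
  gcongr
  linarith

theorem pressureInf_le_add (hρ : IsContPseudoMetric X ρ) {d : ℕ → ℕ} (hd : Tendsto d atTop atTop)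
    (σ : ∀ i, G → Equiv.Perm (Fin (d i))) {f : X → ℝ} (hf : Continuous f) {c : ℝ}
    (hbound : ∃ F : Finset G, ∃ δ > 0, ∀ (n : ℕ) (τ : G → Equiv.Perm (Fin n)),
      ∀ φ ∈ MapSet α ρ F δ τ, ∑ a, f (φ a) ≤ n * c) :
    PressureInf α f ρ d σ ≤ PressureInf α (fun _ => 0) ρ d σ + c := by
  obtain ⟨F, δ, hδ, hF⟩ := hbound
  change _ ≤ EReal.addRightOrderIso c _
  simp only [PressureInf, map_iSup₂, map_iInf₂]
  refine iSup₂_mono fun ε hε => le_iInf₂ fun F₀ hF₀ => le_iInf₂ fun δ₀ hδ₀ => ?_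
  have hsub : ∀ i, MapSet α ρ (F ∪ F₀) (min δ δ₀) (σ i) ⊆ MapSet α ρ F₀ δ₀ (σ i) := fun i =>
    MapSet_mono Finset.subset_union_right (min_le_right _ _) _
  refine iInf₂_le_of_le (F ∪ F₀) (hF₀.mono Finset.subset_union_right) <|
    iInf₂_le_of_le (min δ δ₀) (lt_min hδ hδ₀) ?_
  rw [(EReal.addRightOrderIso c).limsup_apply]
  refine limsup_le_limsup ?_
  filter_upwards [hd.eventually_ge_atTop 1] with i hi
  split_ifs with hne hne₀
  · rw [EReal.addRightOrderIso_apply, ← EReal.coe_add, EReal.coe_le_coe_iff]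
    exact log_Mval_div_le hρ hε hf hi (hsub i) hne fun φ hφ =>
      hF _ _ φ (MapSet_mono Finset.subset_union_left (min_le_left _ _) _ hφ)
  · exact absurd (hne.mono (hsub i)) hne₀
  all_goals exact bot_le

variable {d : ℕ → ℕ} (σ : ∀ i, G → Equiv.Perm (Fin (d i)))

theorem pressureInf_const_le (hd : Tendsto d atTop atTop) (hρ : IsContPseudoMetric X ρ)
    (c : ℝ) :
    PressureInf α (fun _ => c) ρ d σ ≤ PressureInf α (fun _ => 0) ρ d σ + c :=
  pressureInf_le_add hρ hd σ continuous_const ⟨∅, 1, one_pos, fun n _ _ _ => by simp⟩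

theorem pressureInf_le_of_nonpos (hd : Tendsto d atTop atTop) (hρ : IsContPseudoMetric X ρ)
    {f : X → ℝ} (hf : Continuous f) (hf₀ : ∀ x, f x ≤ 0) :
    PressureInf α f ρ d σ ≤ PressureInf α (fun _ => 0) ρ d σ := by
  simpa using pressureInf_le_add (c := 0) hρ hd σ hf
    ⟨∅, 1, one_pos, fun n _ φ _ => by simpa using Finset.sum_nonpos fun a _ => hf₀ (φ a)⟩

theorem pressureInf_comp_sub_le (hd : Tendsto d atTop atTop) {s : G} (hαs : Continuous (α s))
    (hρ : IsCompatMetric X ρ) {g : X → ℝ} (hg : Continuous g) {η : ℝ} (hη : 0 < η) :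
    PressureInf α (fun x => g (α s x) - g x) ρ d σ ≤ PressureInf α (fun _ => 0) ρ d σ + η := by
  obtain ⟨δ, hδ, hsum⟩ := hρ.exists_sum_sub_le_of_rho2_lt hg hη
  refine pressureInf_le_add (f := fun x => g (α s x) - g x) hρ.toIsContPseudoMetric hd σ
    ((hg.comp hαs).sub hg) ⟨{s}, δ, hδ, fun n τ φ hφ => ?_⟩
  have hperm : ∑ a, g (φ (τ s a)) = ∑ a, g (φ a) := Equiv.sum_comp (τ s) fun a => g (φ a)
  have := hsum n (fun a => α s (φ a)) (fun a => φ (τ s a)) (hφ s (Finset.mem_singleton_self s))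
  rw [Finset.sum_sub_distrib] at this ⊢
  linarith

end Pressure

theorem stmt19_general {G : Type*} [Group G]
    {X : Type*} [TopologicalSpace X] [CompactSpace X] [TopologicalSpace.MetrizableSpace X]
    [MeasurableSpace X] [BorelSpace X]
    (α : G → X → X) (hα : ContAction G X α)
    (d : ℕ → ℕ) (σ : ∀ i, G → Equiv.Perm (Fin (d i))) (hσ : IsSoficApprox G d σ)
    (ρ : X → X → ℝ) (hρ : IsCompatMetric X ρ)
    (hfin : PressureInf α (fun _ => (0 : ℝ)) ρ d σ ≠ (⊥ : EReal) ∧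
      PressureInf α (fun _ => (0 : ℝ)) ρ d σ ≠ (⊤ : EReal))
    (μ : MeasureTheory.SignedMeasure X)
    (hint : ∀ g : X → ℝ, Continuous g →
      (((∫ x, g x ∂μ.toJordanDecomposition.posPart -
          ∫ x, g x ∂μ.toJordanDecomposition.negPart) : ℝ) : EReal) ≤ PressureInf α g ρ d σ) :
    (∀ A : Set X, MeasurableSet A → 0 ≤ μ A) ∧ μ Set.univ = 1 ∧
    (∀ (s : G) (A : Set X), MeasurableSet A → μ ((α s) ⁻¹' A) = μ A) := by
  obtain ⟨p, hp⟩ : ∃ p : ℝ, PressureInf α (fun _ => 0) ρ d σ = p :=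
    ⟨_, (EReal.coe_toReal hfin.2 hfin.1).symm⟩
  have hbound : ∀ g, Continuous g → ∀ c : ℝ,
      PressureInf α g ρ d σ ≤ PressureInf α (fun _ => 0) ρ d σ + c → μ.jordanIntegral g ≤ p + c :=
    fun g hg c hc => by
      have := (hint g hg : ((μ.jordanIntegral g : ℝ) : EReal) ≤ _).trans hc
      rw [hp] at this
      exact_mod_cast this
  have hd := hσ.dim_top
  have hρ' := hρ.toIsContPseudoMetric
  refine ⟨fun A hA => μ.apply_nonneg_of_jordanIntegral_nonneg (fun f => ?_) hA, ?_,
    fun s A hA => μ.apply_preimage_eq_of_jordanIntegral_comp (hα.cont s).measurable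
      (fun f => ?_) hA⟩
  · refine nonneg_of_forall_nonneg_neg_mul_le (b := p) fun t ht => ?_
    have hf : Continuous fun x => -t * f x :=
      continuous_const.mul (NNReal.continuous_coe.comp f.continuous)
    have := hbound _ hf 0 <| by
      simpa using pressureInf_le_of_nonpos σ hd hρ' hf fun x =>
        mul_nonpos_of_nonpos_of_nonneg (neg_nonpos.2 ht) (f x).2
    rw [μ.jordanIntegral_const_mul] at this
    linarith
  · have hmass : ∀ c : ℝ, c * μ Set.univ ≤ p + c := fun c => by
      rw [← μ.jordanIntegral_const]
      exact hbound _ continuous_const c (pressureInf_const_le σ hd hρ' c)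
    linarith [eq_zero_of_forall_mul_le (a := μ Set.univ - 1) (b := p) fun t => by
      linarith [hmass t]]
  · have hαs := hα.cont s
    have hf := f.continuous
    refine sub_eq_zero.1 (eq_zero_of_forall_mul_le (b := p + 1) fun t => ?_)
    have := hbound _ (by fun_prop) 1
      (pressureInf_comp_sub_le σ hd hαs hρ (g := fun x => t * f x) (by fun_prop) one_pos)
    rw [μ.jordanIntegral_sub (by fun_prop) (by fun_prop), μ.jordanIntegral_const_mul,
      μ.jordanIntegral_const_mul] at this
    linarith

theorem stmt19 {G : Type*} [Group G] [Countable G]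
    {X : Type*} [TopologicalSpace X] [CompactSpace X] [TopologicalSpace.MetrizableSpace X]
    [MeasurableSpace X] [BorelSpace X]
    (α : G → X → X) (hα : ContAction G X α)
    (d : ℕ → ℕ) (σ : ∀ i, G → Equiv.Perm (Fin (d i))) (hσ : IsSoficApprox G d σ)
    (ρ : X → X → ℝ) (hρ : IsCompatMetric X ρ)
    (hfin : PressureInf α (fun _ => (0 : ℝ)) ρ d σ ≠ (⊥ : EReal) ∧
      PressureInf α (fun _ => (0 : ℝ)) ρ d σ ≠ (⊤ : EReal))
    (μ : MeasureTheory.SignedMeasure X)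
    (hint : ∀ g : X → ℝ, Continuous g →
      (((∫ x, g x ∂μ.toJordanDecomposition.posPart -
          ∫ x, g x ∂μ.toJordanDecomposition.negPart) : ℝ) : EReal) ≤ PressureInf α g ρ d σ) :
    (∀ A : Set X, MeasurableSet A → 0 ≤ μ A) ∧ μ Set.univ = 1 ∧
    (∀ (s : G) (A : Set X), MeasurableSet A → μ ((α s) ⁻¹' A) = μ A) :=
  stmt19_general α hα d σ hσ ρ hρ hfin μ hint

end Sofic
end
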